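/- Let k ≥ 1, N = 2k, and suppose |c_i| = ρ for all i, for some real ρ ≥ 0. Define L0(n) = M₊ for n even, M₋ for n odd, and L1(n) = M₋ for n even, M₊ for n odd. Suppose the sequence (Y_n) in ℂ^N satisfies Y_{n+2} = L0(n) Y_n + L1(n) Y_{n+1} for all n ≥ 0, with arbitrary initial conditions Y_0 = A and Y_1 = B. Then Y_2 = M₊ A + M₋ B; for every even n > 2, Y_n = (ρ^{n−4} D₊ + ρ^{n−2} M₋) B; and for every odd n > 2, Y_n = ρ^{n−3} (D₊ + M₋) B. -/

import Mathlib

/-!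
The operators satisfy `M₊² = M₋² = 0`, `M₊ M₋ = D₊`, `M₊ D₊ = 0` and, when all `|c_i| = ρ`,
`M₋ D₊ = ρ² M₋`. Hence `A` is killed from `Y₃` on, and every later `Y_n` lies in the span of
`D₊ B` and `M₋ B`, on which each step of the alternating recurrence acts by a power of `ρ²`;
an induction over pairs of steps gives the closed form.
-/

/-- `M₊` sends `e_{N−i+1} ↦ c_i e_i` for `1 ≤ i ≤ k` and `e_j ↦ 0` for
`1 ≤ j ≤ k` (here `N = 2k`; matrix with respect to the standard basis,
0-indexed). -/
noncomputable def Mplus (k : ℕ) (c : Fin k → ℂ) :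
    Matrix (Fin (2 * k)) (Fin (2 * k)) ℂ := fun a b =>
  if h : (a : ℕ) < k ∧ (a : ℕ) + (b : ℕ) = 2 * k - 1 then c ⟨a, h.1⟩ else 0

/-- `M₋ = M₊†` sends `e_i ↦ conj(c_i) e_{N−i+1}` for `1 ≤ i ≤ k` and
`e_j ↦ 0` for `k < j ≤ N`. -/
noncomputable def Mminus (k : ℕ) (c : Fin k → ℂ) :
    Matrix (Fin (2 * k)) (Fin (2 * k)) ℂ := fun a b =>
  if h : (b : ℕ) < k ∧ (a : ℕ) + (b : ℕ) = 2 * k - 1 then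
    starRingEnd ℂ (c ⟨b, h.1⟩) else 0

/-- `D₊` sends `e_i ↦ |c_i|² e_i` for `1 ≤ i ≤ k` and `e_j ↦ 0` for
`k < j ≤ N`. -/
noncomputable def Dplus (k : ℕ) (c : Fin k → ℂ) :
    Matrix (Fin (2 * k)) (Fin (2 * k)) ℂ := fun a b =>
  if h : a = b ∧ (a : ℕ) < k then ((‖c ⟨a, h.2⟩‖) ^ 2 : ℂ) else 0

/-- `D₋` sends `e_j ↦ |c_{N−j+1}|² e_j` for `k < j ≤ N` and `e_i ↦ 0` for
`1 ≤ i ≤ k`. -/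
noncomputable def Dminus (k : ℕ) (c : Fin k → ℂ) :
    Matrix (Fin (2 * k)) (Fin (2 * k)) ℂ := fun a b =>
  if h : a = b ∧ k ≤ (a : ℕ) then
    ((‖c ⟨2 * k - 1 - (a : ℕ), by have := a.isLt; omega⟩‖) ^ 2 : ℂ)
  else 0

/-- `L0(n) = M₊` for `n` even, `M₋` for `n` odd. -/
noncomputable def Lzero (k : ℕ) (c : Fin k → ℂ) (n : ℕ) :
    Matrix (Fin (2 * k)) (Fin (2 * k)) ℂ :=
  if Even n then Mplus k c else Mminus k c

/-- `L1(n) = M₋` for `n` even, `M₊` for `n` odd. -/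
noncomputable def Lone (k : ℕ) (c : Fin k → ℂ) (n : ℕ) :
    Matrix (Fin (2 * k)) (Fin (2 * k)) ℂ :=
  if Even n then Mminus k c else Mplus k c

namespace Matrix

variable {ι R : Type*} [Fintype ι] [CommRing R] {P Q D : Matrix ι ι R} {r : R}

theorem alternating_recurrence_closed_form (hPP : P * P = 0) (hQQ : Q * Q = 0)
    (hPQ : P * Q = D) (hPD : P * D = 0) (hQD : Q * D = r • Q) {Y : ℕ → ι → R}
    (hrec : ∀ n, Y (n + 2) =
      (if Even n then P else Q) *ᵥ Y n + (if Even n then Q else P) *ᵥ Y (n + 1))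
    (m : ℕ) :
    Y (2 * m + 3) = r ^ m • (D *ᵥ Y 1 + Q *ᵥ Y 1) ∧
      Y (2 * m + 4) = r ^ m • (D *ᵥ Y 1) + r ^ (m + 1) • (Q *ᵥ Y 1) := by
  have hrec_odd (n : ℕ) (hn : Odd n) : Y (n + 2) = Q *ᵥ Y n + P *ᵥ Y (n + 1) := by
    simpa [Nat.not_even_iff_odd.mpr hn] using hrec n
  have hrec_even (n : ℕ) (hn : Even n) : Y (n + 2) = P *ᵥ Y n + Q *ᵥ Y (n + 1) := by
    simpa [hn] using hrec n
  have hY2 : Y 2 = P *ᵥ Y 0 + Q *ᵥ Y 1 := hrec_even 0 (by decide)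
  have hY3 : Y 3 = D *ᵥ Y 1 + Q *ᵥ Y 1 := by
    rw [hrec_odd 1 odd_one, hY2]
    simp only [mulVec_add, mulVec_mulVec, hPP, hPQ, zero_mulVec]
    abel
  induction m with
  | zero =>
    refine ⟨by simpa using hY3, ?_⟩
    rw [hrec_even 2 even_two, hY2, hY3]
    simp only [mulVec_add, mulVec_mulVec, hPP, hPQ, hQQ, hQD, zero_mulVec, smul_mulVec]
    module
  | succ m ih =>
    have hY5 : Y (2 * m + 3 + 2) = r ^ (m + 1) • (D *ᵥ Y 1 + Q *ᵥ Y 1) := by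
      rw [hrec_odd (2 * m + 3) (by grind), ih.1, ih.2]
      simp only [mulVec_add, mulVec_smul, mulVec_mulVec, hPD, hPQ, hQQ, hQD, zero_mulVec,
        smul_mulVec]
      module
    refine ⟨hY5, ?_⟩
    rw [show 2 * (m + 1) + 4 = 2 * m + 4 + 2 by ring, hrec_even (2 * m + 4) (by grind), ih.2, hY5]
    simp only [mulVec_add, mulVec_smul, mulVec_mulVec, hPD, hPQ, hQQ, hQD, zero_mulVec,
      smul_mulVec]
    module

end Matrix

section
variable {k : ℕ} (c : Fin k → ℂ)

theorem Mplus_mul_apply (N : Matrix (Fin (2 * k)) (Fin (2 * k)) ℂ) (a b : Fin (2 * k)) :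
    (Mplus k c * N) a b =
      if h : (a : ℕ) < k then c ⟨a, h⟩ * N ⟨2 * k - 1 - a, by omega⟩ b else 0 := by
  rw [Matrix.mul_apply]
  split_ifs with ha
  · rw [Finset.sum_eq_single_of_mem ⟨2 * k - 1 - a, by omega⟩ (Finset.mem_univ _)]
    · rw [Mplus, dif_pos ⟨ha, by simp only; omega⟩]
    · intro j _ hj
      rw [Mplus, dif_neg (by rintro ⟨-, h⟩; exact hj (Fin.ext (by simp only; omega))), zero_mul]
  · exact Finset.sum_eq_zero fun j _ => by rw [Mplus, dif_neg (fun h => ha h.1), zero_mul]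

theorem Mminus_mul_apply (N : Matrix (Fin (2 * k)) (Fin (2 * k)) ℂ) (a b : Fin (2 * k)) :
    (Mminus k c * N) a b =
      if h : k ≤ (a : ℕ) then
        starRingEnd ℂ (c ⟨2 * k - 1 - a, by omega⟩) * N ⟨2 * k - 1 - a, by omega⟩ b
      else 0 := by
  rw [Matrix.mul_apply]
  split_ifs with ha
  · rw [Finset.sum_eq_single_of_mem ⟨2 * k - 1 - a, by omega⟩ (Finset.mem_univ _)]
    · rw [Mminus, dif_pos ⟨by simp only; omega, by simp only; omega⟩]
    · intro j _ hj
      rw [Mminus, dif_neg (by rintro ⟨-, h⟩; exact hj (Fin.ext (by simp only; omega))), zero_mul]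
  · exact Finset.sum_eq_zero fun j _ => by
      rw [Mminus, dif_neg (by rintro ⟨h1, h2⟩; omega), zero_mul]

theorem Mplus_mul_Mplus : Mplus k c * Mplus k c = 0 := by
  ext a b
  rw [Mplus_mul_apply]
  split_ifs
  · rw [Mplus, dif_neg (by simp only; omega), mul_zero, Matrix.zero_apply]
  · rfl

theorem Mminus_mul_Mminus : Mminus k c * Mminus k c = 0 := by
  ext a b
  rw [Mminus_mul_apply]
  split_ifs
  · rw [Mminus, dif_neg (by simp only; omega), mul_zero, Matrix.zero_apply]
  · rfl

theorem Mplus_mul_Dplus : Mplus k c * Dplus k c = 0 := by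
  ext a b
  rw [Mplus_mul_apply]
  split_ifs
  · rw [Dplus, dif_neg (by simp only; omega), mul_zero, Matrix.zero_apply]
  · rfl

theorem Mplus_mul_Mminus : Mplus k c * Mminus k c = Dplus k c := by
  ext a b
  rw [Mplus_mul_apply]
  split_ifs with ha
  · by_cases hab : a = b
    · subst hab
      rw [Mminus, Dplus, dif_pos ⟨ha, by simp only; omega⟩, dif_pos ⟨rfl, ha⟩,
        Complex.mul_conj']
    · have hab' : (a : ℕ) ≠ b := fun h => hab (Fin.ext h)
      rw [Mminus, Dplus, dif_neg (by simp only; omega), dif_neg (fun h => hab h.1), mul_zero]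
  · rw [Dplus, dif_neg (fun h => ha h.2)]

theorem Mminus_mul_Dplus {ρ : ℝ} (hc : ∀ i, ‖c i‖ = ρ) :
    Mminus k c * Dplus k c = ((ρ ^ 2 : ℝ) : ℂ) • Mminus k c := by
  ext a b
  rw [Mminus_mul_apply, Matrix.smul_apply]
  split_ifs with ha
  · by_cases hab : b = ⟨2 * k - 1 - a, by omega⟩
    · subst hab
      rw [Dplus, Mminus, dif_pos ⟨rfl, by simp only; omega⟩,
        dif_pos ⟨by simp only; omega, by simp only; omega⟩, hc, smul_eq_mul]
      push_cast
      ring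
    · have hab' : (b : ℕ) ≠ 2 * k - 1 - a := fun h => hab (Fin.ext h)
      rw [Dplus, Mminus, dif_neg (fun h => hab h.1.symm), dif_neg (by omega),
        mul_zero, smul_zero]
  · rw [Mminus, dif_neg (by omega), smul_zero]

end

theorem cauchy_problem_general_solution_general (k : ℕ) (c : Fin k → ℂ)
    (ρ : ℝ) (hc : ∀ i, ‖c i‖ = ρ)
    (Y : ℕ → (Fin (2 * k) → ℂ)) (A B : Fin (2 * k) → ℂ)
    (hrec : ∀ n : ℕ, Y (n + 2)
      = (Lzero k c n).mulVec (Y n) + (Lone k c n).mulVec (Y (n + 1)))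
    (h0 : Y 0 = A) (h1 : Y 1 = B) :
    Y 2 = (Mplus k c).mulVec A + (Mminus k c).mulVec B ∧
    (∀ n : ℕ, 2 < n → Even n →
      Y n = (((ρ ^ (n - 4) : ℝ) : ℂ) • Dplus k c
              + ((ρ ^ (n - 2) : ℝ) : ℂ) • Mminus k c).mulVec B) ∧
    (∀ n : ℕ, 2 < n → Odd n →
      Y n = (((ρ ^ (n - 3) : ℝ) : ℂ) • (Dplus k c + Mminus k c)).mulVec B) := by
  have closed_form := Matrix.alternating_recurrence_closed_form (Mplus_mul_Mplus c)
    (Mminus_mul_Mminus c) (Mplus_mul_Mminus c) (Mplus_mul_Dplus c) (Mminus_mul_Dplus c hc) hrec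
  refine ⟨by simpa [Lzero, Lone, h0, h1] using hrec 0, fun n hn heven => ?_, fun n hn hodd => ?_⟩
  · obtain ⟨m, rfl⟩ : ∃ m, n = 2 * m + 4 := ⟨n / 2 - 2, by grind⟩
    rw [(closed_form m).2, h1, Matrix.add_mulVec, Matrix.smul_mulVec, Matrix.smul_mulVec,
      show 2 * m + 4 - 4 = 2 * m by omega, show 2 * m + 4 - 2 = 2 * (m + 1) by omega]
    push_cast [pow_mul]
    rfl
  · obtain ⟨m, rfl⟩ : ∃ m, n = 2 * m + 3 := ⟨n / 2 - 1, by grind⟩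
    rw [(closed_form m).1, h1, Matrix.smul_mulVec, Matrix.add_mulVec,
      show 2 * m + 3 - 3 = 2 * m by omega]
    push_cast [pow_mul]
    rfl

/-- Solution of the general Cauchy problem: if `|c_i| = ρ` for all `i` and
`Y_{n+2} = L0(n) Y_n + L1(n) Y_{n+1}` with `Y_0 = A`, `Y_1 = B`, then
`Y_2 = M₊ A + M₋ B`, `Y_n = (ρ^{n−4} D₊ + ρ^{n−2} M₋) B` for even `n > 2`,
and `Y_n = ρ^{n−3} (D₊ + M₋) B` for odd `n > 2`. -/
theorem cauchy_problem_general_solution (k : ℕ) (hk : 1 ≤ k) (c : Fin k → ℂ)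
    (ρ : ℝ) (hρ : 0 ≤ ρ) (hc : ∀ i, ‖c i‖ = ρ)
    (Y : ℕ → (Fin (2 * k) → ℂ)) (A B : Fin (2 * k) → ℂ)
    (hrec : ∀ n : ℕ, Y (n + 2)
      = (Lzero k c n).mulVec (Y n) + (Lone k c n).mulVec (Y (n + 1)))
    (h0 : Y 0 = A) (h1 : Y 1 = B) :
    Y 2 = (Mplus k c).mulVec A + (Mminus k c).mulVec B ∧
    (∀ n : ℕ, 2 < n → Even n →
      Y n = (((ρ ^ (n - 4) : ℝ) : ℂ) • Dplus k c
              + ((ρ ^ (n - 2) : ℝ) : ℂ) • Mminus k c).mulVec B) ∧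
    (∀ n : ℕ, 2 < n → Odd n →
      Y n = (((ρ ^ (n - 3) : ℝ) : ℂ) • (Dplus k c + Mminus k c)).mulVec B) :=
  cauchy_problem_general_solution_general k c ρ hc Y A B hrec h0 h1
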